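/- arXiv:2010.01936 — 7 statements merged into one kernel-verified Lean document; each statement's English description precedes it below -/
import Mathlib

section
/- A linear relation M on K^n is symmetric (i.e., M ⊆ M*) if and only if M equals the range of the block column matrix [F; G] for some matrices F, G ∈ K^{n×l} satisfying G*F = F*G. -/
open Matrix
open scoped ComplexOrder

namespace PHDAE
noncomputable section

/-- A linear relation on `ℂ^n`: a subspace of `ℂ^n × ℂ^n`. -/
abbrev Rel (n : ℕ) := Submodule ℂ ((Fin n → ℂ) × (Fin n → ℂ))

/-- The standard inner product `⟨x,y⟩ = ∑ conj (x i) * y i` on `ℂ^n`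
(conjugate-linear in the first argument). -/
noncomputable def ip {n : ℕ} (x y : Fin n → ℂ) : ℂ := star x ⬝ᵥ y

/-- The adjoint relation `M* = {(x,y) | ⟪x,w⟫ = ⟪y,v⟫ for all (v,w) ∈ M}`. -/
noncomputable def adj {n : ℕ} (M : Rel n) : Rel n where
  carrier := {p | ∀ q ∈ M, ip p.1 q.2 = ip p.2 q.1}
  add_mem' := by
    intro a b ha hb q hq
    simp only [Set.mem_setOf_eq, ip, Prod.fst_add, Prod.snd_add, star_add,
      add_dotProduct] at *
    rw [ha q hq, hb q hq]
  zero_mem' := by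
    intro q hq; simp [ip]
  smul_mem' := by
    intro c a ha q hq
    simp only [Set.mem_setOf_eq, ip, Prod.smul_fst, Prod.smul_snd, star_smul,
      smul_dotProduct] at *
    rw [ha q hq]

/-- `−M = {(x, −y) | (x,y) ∈ M}`. -/
def negRel {n : ℕ} (M : Rel n) : Rel n :=
  M.map (LinearMap.prodMap LinearMap.id (-LinearMap.id))

/-- The inverse relation `M⁻¹ = {(y,x) | (x,y) ∈ M}`. -/
def invRel {n : ℕ} (M : Rel n) : Rel n :=
  M.map (LinearEquiv.prodComm ℂ (Fin n → ℂ) (Fin n → ℂ)).toLinearMap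

/-- The product (composition) `D ∘ L = {(x,z) | ∃ y, (x,y) ∈ L ∧ (y,z) ∈ D}`. -/
def comp {n : ℕ} (D L : Rel n) : Rel n where
  carrier := {p | ∃ y, (p.1, y) ∈ L ∧ (y, p.2) ∈ D}
  add_mem' := by
    rintro a b ⟨y, hy1, hy2⟩ ⟨z, hz1, hz2⟩
    exact ⟨y + z, by simpa using L.add_mem hy1 hz1, by simpa using D.add_mem hy2 hz2⟩
  zero_mem' := ⟨0, L.zero_mem, D.zero_mem⟩
  smul_mem' := by
    rintro c a ⟨y, hy1, hy2⟩
    exact ⟨c • y, by simpa using L.smul_mem c hy1, by simpa using D.smul_mem c hy2⟩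

/-- The range representation `ran [F; G] = {(Fz, Gz) | z ∈ ℂ^l}`. -/
def ranRel {n l : ℕ} (F G : Matrix (Fin n) (Fin l) ℂ) : Rel n :=
  LinearMap.range ((Matrix.mulVecLin F).prod (Matrix.mulVecLin G))

/-- The kernel representation `ker [K, L] = {(x,y) | Kx + Ly = 0}`. -/
def kerRel {n : ℕ} (K L : Matrix (Fin n) (Fin n) ℂ) : Rel n :=
  LinearMap.ker ((Matrix.mulVecLin K).coprod (Matrix.mulVecLin L))

/-- The graph `{(x, Ax) | x ∈ ℂ^n}` of a matrix. -/
def graphRel {n : ℕ} (A : Matrix (Fin n) (Fin n) ℂ) : Rel n :=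
  ranRel 1 A

def domRel {n : ℕ} (M : Rel n) : Submodule ℂ (Fin n → ℂ) :=
  M.map (LinearMap.fst ℂ _ _)

def ranSRel {n : ℕ} (M : Rel n) : Submodule ℂ (Fin n → ℂ) :=
  M.map (LinearMap.snd ℂ _ _)

def kerSRel {n : ℕ} (M : Rel n) : Submodule ℂ (Fin n → ℂ) :=
  M.comap (LinearMap.inl ℂ _ _)

def mulRel {n : ℕ} (M : Rel n) : Submodule ℂ (Fin n → ℂ) :=
  M.comap (LinearMap.inr ℂ _ _)

/-- Orthogonal complement in `ℂ^n` with respect to the standard inner product. -/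
noncomputable def orth {n : ℕ} (S : Submodule ℂ (Fin n → ℂ)) : Submodule ℂ (Fin n → ℂ) where
  carrier := {y | ∀ x ∈ S, ip x y = 0}
  add_mem' := by
    intro a b ha hb x hx
    simp only [Set.mem_setOf_eq, ip, dotProduct_add] at *
    rw [ha x hx, hb x hx, add_zero]
  zero_mem' := by intro x hx; simp [ip]
  smul_mem' := by
    intro c a ha x hx
    simp only [Set.mem_setOf_eq, ip, dotProduct_smul] at *
    rw [ha x hx, smul_zero]

def IsSymmetricRel {n : ℕ} (M : Rel n) : Prop := M ≤ adj M
def IsSelfAdjointRel {n : ℕ} (M : Rel n) : Prop := M = adj M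
def IsSkewSymmetricRel {n : ℕ} (M : Rel n) : Prop := M ≤ negRel (adj M)
def IsSkewAdjointRel {n : ℕ} (M : Rel n) : Prop := M = negRel (adj M)

def IsDissipativeRel {n : ℕ} (M : Rel n) : Prop := ∀ p ∈ M, (ip p.1 p.2).re ≤ 0
def IsNonnegRel {n : ℕ} (M : Rel n) : Prop :=
  IsSymmetricRel M ∧ ∀ p ∈ M, 0 ≤ ip p.1 p.2
def IsMaxDissipativeRel {n : ℕ} (M : Rel n) : Prop :=
  IsDissipativeRel M ∧ ∀ M' : Rel n, IsDissipativeRel M' → M ≤ M' → M = M'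
def IsMaxNonnegRel {n : ℕ} (M : Rel n) : Prop :=
  IsNonnegRel M ∧ ∀ M' : Rel n, IsNonnegRel M' → M ≤ M' → M = M'

/-- `det (s E − A)` as a polynomial in `s`. -/
noncomputable def pencilDet {n : ℕ} (E A : Matrix (Fin n) (Fin n) ℂ) : Polynomial ℂ :=
  ((Polynomial.X : Polynomial ℂ) • E.map Polynomial.C - A.map Polynomial.C).det

/-- A square pencil is regular if `det (sE − A)` is not the zero polynomial. -/
def PencilRegular {n : ℕ} (E A : Matrix (Fin n) (Fin n) ℂ) : Prop :=
  pencilDet E A ≠ 0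

/-- The (generic) rank of the pencil `sE − A` over the field of rational functions. -/
noncomputable def pencilRank {n : ℕ} (E A : Matrix (Fin n) (Fin n) ℂ) : ℕ :=
  (((Polynomial.X : Polynomial ℂ) • E.map Polynomial.C - A.map Polynomial.C).map
    (algebraMap (Polynomial ℂ) (RatFunc ℂ))).rank

/-- `μ` is an eigenvalue of `sE − A` if the rank of `μE − A` drops below the generic rank. -/
noncomputable def IsPencilEigenvalue {n : ℕ} (E A : Matrix (Fin n) (Fin n) ℂ) (μ : ℂ) : Prop :=
  (μ • E - A).rank < pencilRank E A

/-- For a regular pencil, the eigenvalue `μ` is semi-simple iff there is no Jordan chain of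
length two, i.e. no `x ≠ 0` with `(μE − A)x = 0` and `Ex ∈ ran (μE − A)`. -/
def SemiSimpleEig {n : ℕ} (E A : Matrix (Fin n) (Fin n) ℂ) (μ : ℂ) : Prop :=
  ¬ ∃ x y : Fin n → ℂ, x ≠ 0 ∧ (μ • E - A).mulVec x = 0 ∧ (μ • E - A).mulVec y = E.mulVec x

/-- For a regular pencil, all Jordan blocks at the eigenvalue `μ` have size at most two iff
there is no Jordan chain of length three. -/
def JordanBlocksAtMostTwo {n : ℕ} (E A : Matrix (Fin n) (Fin n) ℂ) (μ : ℂ) : Prop :=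
  ¬ ∃ x y z : Fin n → ℂ, x ≠ 0 ∧ (μ • E - A).mulVec x = 0 ∧
    (μ • E - A).mulVec y = E.mulVec x ∧ (μ • E - A).mulVec z = E.mulVec y

/-- A fixed matrix norm (Frobenius norm); the resolvent-growth characterizations are
independent of the choice of matrix norm. -/
noncomputable def mnorm {n : ℕ} (M : Matrix (Fin n) (Fin n) ℂ) : ℝ :=
  Real.sqrt (∑ i, ∑ j, ‖M i j‖ ^ 2)

end
end PHDAE

/-!
Since `⟪Fz, Gw⟫ - ⟪Gz, Fw⟫ = ⟪z, (FᴴG - GᴴF) w⟫`, a relation `ran [F; G]` is symmetric exactly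
when `GᴴF = FᴴG`. Every relation `M` is of this form: take as columns of `[F; G]` a basis of `M`.
-/

namespace PHDAE

open Matrix

theorem mk_mem_ranRel {n l : ℕ} (F G : Matrix (Fin n) (Fin l) ℂ) (z : Fin l → ℂ) :
    (F *ᵥ z, G *ᵥ z) ∈ ranRel F G :=
  ⟨z, rfl⟩

theorem ip_mulVec_mulVec {n l : ℕ} (A B : Matrix (Fin n) (Fin l) ℂ) (z w : Fin l → ℂ) :
    ip (A *ᵥ z) (B *ᵥ w) = ip z ((Aᴴ * B) *ᵥ w) := by
  rw [ip, ip, star_mulVec, ← dotProduct_mulVec, mulVec_mulVec]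

theorem eq_of_forall_ip_eq {l : ℕ} {u v : Fin l → ℂ} (h : ∀ z, ip z u = ip z v) : u = v := by
  funext i
  simpa [ip] using h (Pi.single i 1)

theorem isSymmetricRel_ranRel_iff {n l : ℕ} (F G : Matrix (Fin n) (Fin l) ℂ) :
    IsSymmetricRel (ranRel F G) ↔ Gᴴ * F = Fᴴ * G := by
  constructor
  · intro h
    refine ext_iff_mulVec.mpr fun w => eq_of_forall_ip_eq fun z => ?_
    have hzw := h (mk_mem_ranRel F G z) _ (mk_mem_ranRel F G w)
    rwa [ip_mulVec_mulVec, ip_mulVec_mulVec, eq_comm] at hzw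
  · rintro hFG _ ⟨z, rfl⟩ _ ⟨w, rfl⟩
    change ip (F *ᵥ z) (G *ᵥ w) = ip (G *ᵥ z) (F *ᵥ w)
    rw [ip_mulVec_mulVec, ip_mulVec_mulVec, hFG]

theorem ranRel_toMatrix'_eq_range {n l : ℕ} (f : (Fin l → ℂ) →ₗ[ℂ] (Fin n → ℂ) × (Fin n → ℂ)) :
    ranRel (LinearMap.toMatrix' (LinearMap.fst ℂ _ _ ∘ₗ f))
      (LinearMap.toMatrix' (LinearMap.snd ℂ _ _ ∘ₗ f)) = LinearMap.range f := by
  rw [ranRel, ← toLin'_apply', ← toLin'_apply', toLin'_toMatrix', toLin'_toMatrix',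
    ← LinearMap.prod_comp, LinearMap.pair_fst_snd, LinearMap.id_comp]

theorem exists_eq_ranRel {n : ℕ} (M : Rel n) :
    ∃ (l : ℕ) (F G : Matrix (Fin n) (Fin l) ℂ), M = ranRel F G := by
  let f := M.subtype ∘ₗ (Module.finBasis ℂ M).equivFun.symm.toLinearMap
  refine ⟨_, _, _, ((ranRel_toMatrix'_eq_range f).trans ?_).symm⟩
  rw [LinearMap.range_comp_of_range_eq_top _ (LinearEquiv.range _), Submodule.range_subtype]

end PHDAE

open PHDAE Matrix in
/-- `M` is symmetric iff `M = ran [F; G]` for some `F, G` with `G*F = F*G`. -/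
theorem stmt_1 {n : ℕ} (M : Rel n) :
    IsSymmetricRel M ↔ ∃ (l : ℕ) (F G : Matrix (Fin n) (Fin l) ℂ),
      M = ranRel F G ∧ Gᴴ * F = Fᴴ * G := by
  constructor
  · intro hM
    obtain ⟨l, F, G, rfl⟩ := exists_eq_ranRel M
    exact ⟨l, F, G, rfl, (isSymmetricRel_ranRel_iff F G).mp hM⟩
  · rintro ⟨l, F, G, rfl, hFG⟩
    exact (isSymmetricRel_ranRel_iff F G).mpr hFG
end

section
/- For a linear relation M on K^n, the following are equivalent: (a) M is skew-adjoint (M = −M*); (b) M is skew-symmetric (M ⊆ −M*) and dim M = n; (c) M = ker[K, L] for some K, L ∈ K^{n×n} with KL* = −LK* and rank[K, L] = n. -/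
open Matrix
open scoped ComplexOrder

/-!
The Hermitian form `ω(p, q) = ⟨p₁, q₂⟩ + ⟨p₂, q₁⟩` on `ℂⁿ × ℂⁿ` is nondegenerate and `−M*` is the
`ω`-orthogonal of `M`, so `dim (−M*) + dim M = 2n`; this gives (a) ⇔ (b). Writing `M = ran [F; G]`
one finds `−M* = ker [G*, F*]`, and `ran [F; G] ⊆ ker [K, L]` iff `KF + LG = 0`. Hence a
skew-adjoint `M` equals `ker [G*, F*]` with `G*F + F*G = 0`. Conversely, if `M = ker [K, L]` with
`KL* + LK* = 0`, then `ran [L*; K*] ⊆ M` and `−(ran [L*; K*])* = M`; counting dimensions,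
`ran [L*; K*] = M`, so `−M* = M`.
-/

namespace PHDAE

open Module

variable {n : ℕ}

lemma mem_negRel_adj_iff {M : Rel n} {p : (Fin n → ℂ) × (Fin n → ℂ)} :
    p ∈ negRel (adj M) ↔ ∀ q ∈ M, ip p.1 q.2 + ip p.2 q.1 = 0 := by
  constructor
  · rintro ⟨⟨a, b⟩, hab, rfl⟩ q hq
    have h := hab q hq
    simp only [ip, LinearMap.prodMap_apply, LinearMap.id_apply, LinearMap.neg_apply, star_neg,
      neg_dotProduct] at h ⊢
    rw [h, add_neg_cancel]
  · intro h
    refine ⟨(p.1, -p.2), fun q hq => ?_, by simp⟩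
    simp only [ip, star_neg, neg_dotProduct] at h ⊢
    linear_combination h q hq

noncomputable def toEuclidean (n : ℕ) :
    ((Fin n → ℂ) × (Fin n → ℂ)) ≃ₗ[ℂ] EuclideanSpace ℂ (Fin n ⊕ Fin n) :=
  (LinearEquiv.sumArrowLequivProdArrow (Fin n) (Fin n) ℂ ℂ).symm ≪≫ₗ
    (WithLp.linearEquiv 2 ℂ (Fin n ⊕ Fin n → ℂ)).symm

lemma inner_toEuclidean (p q : (Fin n → ℂ) × (Fin n → ℂ)) :
    inner ℂ (toEuclidean n p) (toEuclidean n q) = ip p.1 q.1 + ip p.2 q.2 := by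
  change Sum.elim q.1 q.2 ⬝ᵥ star (Sum.elim p.1 p.2) = _
  rw [Function.star_sumElim, sumElim_dotProduct_sumElim, ip, ip, dotProduct_comm q.1,
    dotProduct_comm q.2]

lemma map_toEuclidean_negRel_adj (M : Rel n) :
    (negRel (adj M)).map (toEuclidean n).toLinearMap =
      (M.map (LinearEquiv.prodComm ℂ _ _ ≪≫ₗ toEuclidean n).toLinearMap)ᗮ := by
  ext v
  obtain ⟨p, rfl⟩ := (toEuclidean n).surjective v
  rw [Submodule.mem_map_equiv, LinearEquiv.symm_apply_apply, mem_negRel_adj_iff,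
    Submodule.mem_orthogonal']
  simp only [Submodule.mem_map, forall_exists_index, and_imp, forall_apply_eq_imp_iff₂,
    LinearEquiv.coe_coe, LinearEquiv.trans_apply, LinearEquiv.prodComm_apply, inner_toEuclidean,
    Prod.fst_swap, Prod.snd_swap]

lemma finrank_negRel_adj_add_finrank (M : Rel n) :
    finrank ℂ (negRel (adj M)) + finrank ℂ M = 2 * n := by
  have h := Submodule.finrank_add_finrank_orthogonal
    (M.map (LinearEquiv.prodComm ℂ _ _ ≪≫ₗ toEuclidean n).toLinearMap)
  rw [← map_toEuclidean_negRel_adj, LinearEquiv.finrank_map_eq, LinearEquiv.finrank_map_eq,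
    finrank_euclideanSpace, Fintype.card_sum, Fintype.card_fin] at h
  omega

@[simp]
lemma mem_kerRel_iff {K L : Matrix (Fin n) (Fin n) ℂ} {p : (Fin n → ℂ) × (Fin n → ℂ)} :
    p ∈ kerRel K L ↔ K *ᵥ p.1 + L *ᵥ p.2 = 0 := by
  simp [kerRel]

lemma ranRel_le_kerRel_iff {l : ℕ} {F G : Matrix (Fin n) (Fin l) ℂ}
    {K L : Matrix (Fin n) (Fin n) ℂ} : ranRel F G ≤ kerRel K L ↔ K * F + L * G = 0 := by
  rw [ranRel, kerRel, LinearMap.range_le_ker_iff, LinearMap.coprod_comp_prod,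
    ← Matrix.mulVecLin_mul, ← Matrix.mulVecLin_mul, ← Matrix.mulVecLin_add,
    ← Matrix.toLin'_apply', LinearEquiv.map_eq_zero_iff]

lemma negRel_adj_ranRel (F G : Matrix (Fin n) (Fin n) ℂ) :
    negRel (adj (ranRel F G)) = kerRel Gᴴ Fᴴ := by
  ext p
  have hip (A : Matrix (Fin n) (Fin n) ℂ) (x z : Fin n → ℂ) :
      ip x (A *ᵥ z) = star (Aᴴ *ᵥ x) ⬝ᵥ z := by
    rw [ip, dotProduct_mulVec, star_mulVec, conjTranspose_conjTranspose]
  simp only [mem_negRel_adj_iff, ranRel, LinearMap.mem_range, forall_exists_index,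
    forall_apply_eq_imp_iff, LinearMap.coe_prod, Function.prod, Matrix.mulVecLin_apply, hip,
    ← add_dotProduct, ← star_add, mem_kerRel_iff, dotProduct_eq_zero_iff, star_eq_zero]

lemma finrank_kerRel_add_rank (K L : Matrix (Fin n) (Fin n) ℂ) :
    finrank ℂ (kerRel K L) + (fromCols K L).rank = 2 * n := by
  have h : (fromCols K L).mulVecLin = ((mulVecLin K).coprod (mulVecLin L)).comp
      (LinearEquiv.sumArrowLequivProdArrow (Fin n) (Fin n) ℂ ℂ).toLinearMap :=
    LinearMap.ext fun u => fromCols_mulVec K L u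
  have := LinearMap.finrank_range_add_finrank_ker ((mulVecLin K).coprod (mulVecLin L))
  rw [Matrix.rank, h, LinearMap.range_comp, LinearEquiv.range, Submodule.map_top, kerRel]
  simp only [finrank_prod, finrank_fin_fun] at this
  omega

lemma exists_ranRel_eq {l : ℕ} (M : Rel n) (h : finrank ℂ M = l) :
    ∃ F G : Matrix (Fin n) (Fin l) ℂ, ranRel F G = M := by
  let f := M.subtype ∘ₗ (LinearEquiv.ofFinrankEq (Fin l → ℂ) M (by simp [h])).toLinearMap
  refine ⟨LinearMap.toMatrix' (LinearMap.fst ℂ _ _ ∘ₗ f),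
    LinearMap.toMatrix' (LinearMap.snd ℂ _ _ ∘ₗ f), ?_⟩
  rw [ranRel, ← Matrix.toLin'_apply', ← Matrix.toLin'_apply', Matrix.toLin'_toMatrix',
    Matrix.toLin'_toMatrix']
  change LinearMap.range f = M
  rw [LinearMap.range_comp, LinearEquiv.range, Submodule.map_top, Submodule.range_subtype]

variable {M : Rel n}

lemma IsSkewAdjointRel.finrank_eq (h : IsSkewAdjointRel M) : finrank ℂ M = n := by
  have := finrank_negRel_adj_add_finrank M
  rw [← h] at this
  omega

lemma isSkewAdjointRel_iff_isSkewSymmetricRel_and_finrank_eq :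
    IsSkewAdjointRel M ↔ IsSkewSymmetricRel M ∧ finrank ℂ M = n := by
  refine ⟨fun h => ⟨le_of_eq h, h.finrank_eq⟩, fun ⟨hle, hdim⟩ => ?_⟩
  have := finrank_negRel_adj_add_finrank M
  exact Submodule.eq_of_le_of_finrank_eq hle (by omega)

lemma IsSkewAdjointRel.exists_eq_kerRel (h : IsSkewAdjointRel M) :
    ∃ K L : Matrix (Fin n) (Fin n) ℂ,
      M = kerRel K L ∧ K * Lᴴ = -(L * Kᴴ) ∧ (fromCols K L).rank = n := by
  obtain ⟨F, G, rfl⟩ := exists_ranRel_eq M h.finrank_eq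
  have hM : ranRel F G = kerRel Gᴴ Fᴴ := by rw [← negRel_adj_ranRel]; exact h
  refine ⟨Gᴴ, Fᴴ, hM, ?_, ?_⟩
  · rw [conjTranspose_conjTranspose, conjTranspose_conjTranspose, eq_neg_iff_add_eq_zero]
    exact ranRel_le_kerRel_iff.mp hM.le
  · have := finrank_kerRel_add_rank Gᴴ Fᴴ
    rw [← hM, h.finrank_eq] at this
    omega

lemma isSkewAdjointRel_kerRel {K L : Matrix (Fin n) (Fin n) ℂ} (hKL : K * Lᴴ = -(L * Kᴴ))
    (hrank : (fromCols K L).rank = n) : IsSkewAdjointRel (kerRel K L) := by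
  have hadj : negRel (adj (ranRel Lᴴ Kᴴ)) = kerRel K L := by
    simpa using negRel_adj_ranRel Lᴴ Kᴴ
  have hle : ranRel Lᴴ Kᴴ ≤ kerRel K L :=
    ranRel_le_kerRel_iff.mpr (eq_neg_iff_add_eq_zero.mp hKL)
  have hdim := finrank_kerRel_add_rank K L
  have hdim' := finrank_negRel_adj_add_finrank (ranRel Lᴴ Kᴴ)
  rw [hadj] at hdim'
  have hran : ranRel Lᴴ Kᴴ = kerRel K L := Submodule.eq_of_le_of_finrank_eq hle (by omega)
  rw [IsSkewAdjointRel, ← hran, hadj, hran]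

end PHDAE

open PHDAE Matrix in
/-- `M` is skew-adjoint ⟺ skew-symmetric with `dim M = n`
⟺ `M = ker [K, L]` with `KL* = −LK*` and `rank [K, L] = n`. -/
theorem stmt_3 {n : ℕ} (M : Rel n) :
    List.TFAE [IsSkewAdjointRel M,
      IsSkewSymmetricRel M ∧ Module.finrank ℂ M = n,
      ∃ K L : Matrix (Fin n) (Fin n) ℂ, M = kerRel K L ∧ K * Lᴴ = -(L * Kᴴ) ∧
        (Matrix.fromCols K L).rank = n] := by
  tfae_have 1 ↔ 2 := isSkewAdjointRel_iff_isSkewSymmetricRel_and_finrank_eq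
  tfae_have 1 → 3 := IsSkewAdjointRel.exists_eq_kerRel
  tfae_have 3 → 1 := by
    rintro ⟨K, L, rfl, hKL, hrank⟩
    exact isSkewAdjointRel_kerRel hKL hrank
  tfae_finish
end

section
/- A dissipative linear relation M ⊆ K^n × K^n is maximally dissipative (not properly contained in any dissipative relation) if and only if dim M = n. -/
open Matrix
open scoped ComplexOrder

/-!
By polarization, `re ⟪x, y⟫ = (‖x + y‖² - ‖x - y‖²) / 4`, so `M ≤ E × E` is dissipative iff
`‖x + y‖ ≤ ‖x - y‖` on `M`. Hence `(x, y) ↦ x - y` is injective on a dissipative `M`, and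
`dim M ≤ dim E`. If its image is a proper subspace, pick `v ≠ 0` orthogonal to it: adding `(v, -v)`
to `M` leaves `x + y` unchanged and, by Pythagoras, only lengthens `x - y`, so `M` is not maximal.
-/

open Module RCLike
open scoped InnerProductSpace

variable {𝕜 E : Type*} [RCLike 𝕜] [NormedAddCommGroup E] [InnerProductSpace 𝕜 E]

variable (𝕜 E) in
def LinearMap.fstSubSnd : E × E →ₗ[𝕜] E := LinearMap.fst 𝕜 E E - LinearMap.snd 𝕜 E E

@[simp]
lemma LinearMap.fstSubSnd_apply (p : E × E) : LinearMap.fstSubSnd 𝕜 E p = p.1 - p.2 := rfl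

namespace Submodule

def IsDissipative (M : Submodule 𝕜 (E × E)) : Prop := ∀ p ∈ M, re ⟪p.1, p.2⟫_𝕜 ≤ 0

variable {M : Submodule 𝕜 (E × E)}

lemma IsDissipative.disjoint_ker_fstSubSnd (hM : M.IsDissipative) :
    Disjoint M (LinearMap.ker (LinearMap.fstSubSnd 𝕜 E)) := by
  rw [disjoint_def]
  rintro ⟨x, y⟩ hp hker
  obtain rfl : x = y := sub_eq_zero.mp hker
  obtain rfl : x = 0 := re_inner_self_nonpos.mp (hM _ hp)
  rfl

lemma IsDissipative.finrank_map_fstSubSnd (hM : M.IsDissipative) :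
    finrank 𝕜 (M.map (LinearMap.fstSubSnd 𝕜 E)) = finrank 𝕜 M := by
  rw [← LinearMap.range_domRestrict]
  exact LinearMap.finrank_range_of_inj
    (LinearMap.injective_domRestrict_iff.mpr hM.disjoint_ker_fstSubSnd)

lemma IsDissipative.finrank_le [FiniteDimensional 𝕜 E] (hM : M.IsDissipative) :
    finrank 𝕜 M ≤ finrank 𝕜 E :=
  hM.finrank_map_fstSubSnd ▸ Submodule.finrank_le _

lemma IsDissipative.sup_span_singleton (hM : M.IsDissipative) {v : E}
    (hv : v ∈ (M.map (LinearMap.fstSubSnd 𝕜 E))ᗮ) :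
    (M ⊔ span 𝕜 {(v, -v)}).IsDissipative := by
  intro p hp
  obtain ⟨⟨x, y⟩, hxy, _, hc, rfl⟩ := mem_sup.mp hp
  obtain ⟨c, rfl⟩ := mem_span_singleton.mp hc
  have hv' : ⟪x - y, v⟫_𝕜 = 0 := (mem_orthogonal _ _).mp hv _ ⟨(x, y), hxy, rfl⟩
  have horth : ⟪x - y, (2 * c) • v⟫_𝕜 = 0 := by rw [inner_smul_right, hv', mul_zero]
  have hsum : x + c • v + (y + c • -v) = x + y := by module
  have hdiff : x + c • v - (y + c • -v) = x - y + (2 * c) • v := by module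
  have hpyth := norm_add_sq_eq_norm_sq_add_norm_sq_of_inner_eq_zero _ _ horth
  have hxy' := hM _ hxy
  simp only [Prod.fst_add, Prod.snd_add, Prod.smul_mk] at hxy' ⊢
  rw [re_inner_eq_norm_add_mul_self_sub_norm_sub_mul_self_div_four] at hxy' ⊢
  rw [hsum, hdiff]
  nlinarith [norm_nonneg ((2 * c) • v)]

lemma map_fstSubSnd_eq_top_of_maximal [FiniteDimensional 𝕜 E] (h : Maximal IsDissipative M) :
    M.map (LinearMap.fstSubSnd 𝕜 E) = ⊤ := by
  set K := M.map (LinearMap.fstSubSnd 𝕜 E)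
  rw [← orthogonal_eq_bot_iff, eq_bot_iff]
  intro v hv
  have hmem : (v, -v) ∈ M :=
    h.eq_of_le (h.prop.sup_span_singleton hv) le_sup_left ▸
      mem_sup_right (mem_span_singleton_self _)
  have hboth : v - -v ∈ K ⊓ Kᗮ := ⟨mem_map_of_mem hmem, sub_mem hv (neg_mem hv)⟩
  rw [inf_orthogonal_eq_bot, mem_bot, sub_neg_eq_add, ← two_smul 𝕜, smul_eq_zero] at hboth
  exact (mem_bot 𝕜).mpr (hboth.resolve_left two_ne_zero)

theorem IsDissipative.maximal_iff_finrank_eq [FiniteDimensional 𝕜 E] (hM : M.IsDissipative) :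
    Maximal IsDissipative M ↔ finrank 𝕜 M = finrank 𝕜 E := by
  refine ⟨fun h => ?_, fun h => ⟨hM, fun N hN hle => ?_⟩⟩
  · rw [← hM.finrank_map_fstSubSnd, map_fstSubSnd_eq_top_of_maximal h, finrank_top]
  · exact (eq_of_le_of_finrank_le hle (h ▸ hN.finrank_le)).ge

end Submodule

namespace PHDAE

variable {n : ℕ}

def euclideanEquiv (n : ℕ) :
    ((Fin n → ℂ) × (Fin n → ℂ)) ≃ₗ[ℂ] EuclideanSpace ℂ (Fin n) × EuclideanSpace ℂ (Fin n) :=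
  (WithLp.linearEquiv 2 ℂ (Fin n → ℂ)).symm.prodCongr (WithLp.linearEquiv 2 ℂ (Fin n → ℂ)).symm

lemma ip_eq_inner (x y : Fin n → ℂ) : ip x y = inner ℂ (WithLp.toLp 2 x) (WithLp.toLp 2 y) := by
  simp [ip, dotProduct, PiLp.inner_apply, mul_comm]

lemma isDissipativeRel_iff (M : Rel n) :
    IsDissipativeRel M ↔ (M.map (euclideanEquiv n).toLinearMap).IsDissipative := by
  simp only [IsDissipativeRel, Submodule.IsDissipative, ← SetLike.mem_coe, Submodule.map_coe,
    Set.forall_mem_image, ip_eq_inner]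
  rfl

lemma isMaxDissipativeRel_iff (M : Rel n) :
    IsMaxDissipativeRel M ↔
      Maximal Submodule.IsDissipative (M.map (euclideanEquiv n).toLinearMap) := by
  let e := Submodule.orderIsoMapComap (euclideanEquiv n)
  have hP : IsDissipativeRel = fun N : Rel n => (e N).IsDissipative :=
    funext fun N => propext (isDissipativeRel_iff N)
  rw [IsMaxDissipativeRel, ← maximal_iff, hP]
  exact (e.toOrderEmbedding.maximal_apply_mem_iff (t := {N | N.IsDissipative})
    fun N _ => e.surjective N).symm

end PHDAE

open PHDAE in
/-- a dissipative relation is maximally dissipative iff `dim M = n`. -/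
theorem stmt_6 {n : ℕ} (M : Rel n) (hM : IsDissipativeRel M) :
    IsMaxDissipativeRel M ↔ Module.finrank ℂ M = n := by
  rw [isMaxDissipativeRel_iff, ((isDissipativeRel_iff M).mp hM).maximal_iff_finrank_eq,
    LinearEquiv.finrank_map_eq, finrank_euclideanSpace_fin]
end

section
/- A matrix pencil sE − A ∈ K[s]^{n×n} is positive real if and only if E = E* ≥ 0 and A + A* ≤ 0. -/
open Matrix
open scoped ComplexOrder

/-!
With `a = x* E x` and `d = x* A x`, the quadratic form of `(μE − A) + (μE − A)*` at `x` is
`2 Re (μ a − d)`, so positive realness says `Re d ≤ Re (μ a)` for every `μ` with `Re μ > 0`.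
Moving `μ` along a vertical line forces `a` to be real; letting `μ > 0` tend to `∞` and to `0`
then gives `a ≥ 0` and `Re d ≤ 0`. Over `ℂ` a matrix with nonnegative quadratic form is
automatically Hermitian, so these pointwise conditions are exactly `E ≥ 0` and `A + A* ≤ 0`.
-/

open Filter Topology

theorem forall_pos_le_mul_iff {c r : ℝ} : (∀ t : ℝ, 0 < t → c ≤ t * r) ↔ 0 ≤ r ∧ c ≤ 0 := by
  refine ⟨fun h => ⟨?_, ?_⟩, fun ⟨hr, hc⟩ t ht => hc.trans (mul_nonneg ht.le hr)⟩
  · refine le_of_tendsto ((tendsto_const_nhds (x := c)).div_atTop tendsto_id) ?_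
    filter_upwards [eventually_gt_atTop 0] with t ht
    exact (div_le_iff₀' ht).2 (h t ht)
  · have : Tendsto (fun t : ℝ => t * r) (𝓝[>] 0) (𝓝 0) := by
      simpa using (continuous_mul_const r).continuousWithinAt.tendsto (s := Set.Ioi 0) (x := 0)
    exact ge_of_tendsto this (eventually_nhdsWithin_of_forall h)

theorem Complex.forall_re_pos_le_re_mul_iff {a : ℂ} {c : ℝ} :
    (∀ μ : ℂ, 0 < μ.re → c ≤ (μ * a).re) ↔ 0 ≤ a ∧ c ≤ 0 := by
  refine ⟨fun h => ?_, fun ⟨ha, hc⟩ μ hμ => ?_⟩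
  · have him : a.im = 0 := by
      by_contra him
      have := h ⟨1, (a.re - c + 1) / a.im⟩ one_pos
      simp only [mul_re, div_mul_cancel₀ _ him, one_mul] at this
      linarith
    obtain ⟨hre, hc⟩ := forall_pos_le_mul_iff.1 fun t ht => by simpa using h t (by simpa)
    exact ⟨nonneg_iff.2 ⟨hre, him.symm⟩, hc⟩
  · rw [nonneg_iff] at ha
    rw [mul_re, ← ha.2, mul_zero, sub_zero]
    exact hc.trans (mul_nonneg hμ.le ha.1)

namespace Matrix

variable {ι : Type*} [Fintype ι]

theorem dotProduct_conjTranspose_mulVec (M : Matrix ι ι ℂ) (x : ι → ℂ) :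
    star x ⬝ᵥ Mᴴ *ᵥ x = star (star x ⬝ᵥ M *ᵥ x) := by
  rw [star_dotProduct, star_mulVec, conjTranspose_conjTranspose, ← dotProduct_mulVec]

theorem posSemidef_iff_forall_dotProduct_mulVec_nonneg [DecidableEq ι] {M : Matrix ι ι ℂ} :
    M.PosSemidef ↔ ∀ x, 0 ≤ star x ⬝ᵥ M *ᵥ x := by
  rw [← isPositive_toEuclideanLin_iff, LinearMap.isPositive_iff_complex,
    (WithLp.equiv 2 (ι → ℂ)).symm.surjective.forall]
  refine forall_congr' fun x => ?_
  have : inner ℂ (toEuclideanLin M ((WithLp.equiv 2 _).symm x)) ((WithLp.equiv 2 _).symm x) =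
      star (star x ⬝ᵥ M *ᵥ x) := by
    rw [WithLp.equiv_symm_apply, EuclideanSpace.inner_eq_star_dotProduct, star_dotProduct,
      star_star, dotProduct_comm]
    rfl
  rw [this]
  simp [Complex.nonneg_iff, Complex.ext_iff, and_comm, eq_comm]

theorem posSemidef_add_conjTranspose_self_iff {M : Matrix ι ι ℂ} :
    (M + Mᴴ).PosSemidef ↔ ∀ x, 0 ≤ (star x ⬝ᵥ M *ᵥ x).re := by
  rw [posSemidef_iff_dotProduct_mulVec, and_iff_right (isHermitian_add_transpose_self M)]
  refine forall_congr' fun x => ?_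
  rw [add_mulVec, dotProduct_add, dotProduct_conjTranspose_mulVec, Complex.star_def,
    Complex.add_conj, Complex.zero_le_real, mul_nonneg_iff_of_pos_left two_pos]

theorem dotProduct_smul_sub_mulVec (μ : ℂ) (E A : Matrix ι ι ℂ) (x : ι → ℂ) :
    star x ⬝ᵥ (μ • E - A) *ᵥ x = μ * (star x ⬝ᵥ E *ᵥ x) - star x ⬝ᵥ A *ᵥ x := by
  rw [sub_mulVec, smul_mulVec, dotProduct_sub, dotProduct_smul, smul_eq_mul]

end Matrix

open PHDAE Matrix in
/-- Since a pencil is a matrix polynomial it has no poles at all, so condition (a) of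
positive realness is automatic and positive realness amounts to
`(μE − A) + (μE − A)* ≥ 0` for all `μ` in the open right half-plane. -/
theorem stmt_13 {n : ℕ} (E A : Matrix (Fin n) (Fin n) ℂ) :
    (∀ μ : ℂ, 0 < μ.re → ((μ • E - A) + (μ • E - A)ᴴ).PosSemidef) ↔
      E.PosSemidef ∧ (-(A + Aᴴ)).PosSemidef := by
  have hneg : -(A + Aᴴ) = -A + (-A)ᴴ := by rw [conjTranspose_neg, neg_add]
  calc (∀ μ : ℂ, 0 < μ.re → ((μ • E - A) + (μ • E - A)ᴴ).PosSemidef)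
      ↔ ∀ x, ∀ μ : ℂ, 0 < μ.re → (star x ⬝ᵥ A *ᵥ x).re ≤ (μ * (star x ⬝ᵥ E *ᵥ x)).re := by
        simp only [posSemidef_add_conjTranspose_self_iff, dotProduct_smul_sub_mulVec,
          Complex.sub_re, sub_nonneg]
        exact ⟨fun h x μ hμ => h μ hμ x, fun h μ hμ x => h x μ hμ⟩
    _ ↔ ∀ x, 0 ≤ star x ⬝ᵥ E *ᵥ x ∧ (star x ⬝ᵥ A *ᵥ x).re ≤ 0 :=
        forall_congr' fun x => Complex.forall_re_pos_le_re_mul_iff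
    _ ↔ E.PosSemidef ∧ (-(A + Aᴴ)).PosSemidef := by
        rw [forall_and, hneg, posSemidef_add_conjTranspose_self_iff,
          posSemidef_iff_forall_dotProduct_mulVec_nonneg]
        simp only [neg_mulVec, dotProduct_neg, Complex.neg_re, neg_nonneg]
end

section
/- Let E, D, Q ∈ K^{n×n} with Q*E = E*Q and D + D* ≤ 0. If the pencil sE − DQ is regular, then the pencil sE − Q is regular, and equivalently the linear relation L = ran[E; Q] has dimension n (i.e., L is self-adjoint). -/
open Matrix
open scoped ComplexOrder

/-!
A common null vector of `E` and `Q` is a null vector of `sE − DQ` for every `s`, so regularity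
of `sE − DQ` forces `ker E ∩ ker Q = 0`. Then `z ↦ (Ez, Qz)` is injective and `ran [E; Q]` has
dimension `n`. Since `Q*E = E*Q` is Hermitian, `(sE − Q)x = 0` at a non-real `s` gives
`conj s ‖Ex‖² = ⟪Qx, Ex⟫ = s ‖Ex‖²`, hence `Ex = Qx = 0`, so `sE − Q` is regular. Finally
`ran [E; Q]` is symmetric, and its adjoint `ker [Q*, −E*]` has dimension `2n − n`, so the two
coincide.
-/

namespace PHDAE

variable {n l : ℕ}

lemma eval_pencilDet (E A : Matrix (Fin n) (Fin n) ℂ) (s : ℂ) :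
    (pencilDet E A).eval s = (s • E - A).det := by
  rw [pencilDet, ← Polynomial.coe_evalRingHom, RingHom.map_det]
  congr 1
  ext i j
  simp only [RingHom.mapMatrix_apply, Matrix.map_apply, Matrix.sub_apply, Matrix.smul_apply,
    smul_eq_mul, Polynomial.coe_evalRingHom, Polynomial.eval_sub, Polynomial.eval_mul,
    Polynomial.eval_X, Polynomial.eval_C]

lemma PencilRegular.eq_zero_of_mulVec_eq_zero {E A : Matrix (Fin n) (Fin n) ℂ}
    (hreg : PencilRegular E A) {x : Fin n → ℂ} (hE : E *ᵥ x = 0) (hA : A *ᵥ x = 0) : x = 0 := by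
  classical
  by_contra hx
  refine hreg (Polynomial.funext fun s => ?_)
  rw [eval_pencilDet, Polynomial.eval_zero, ← exists_mulVec_eq_zero_iff]
  exact ⟨x, hx, by simp [sub_mulVec, smul_mulVec, hE, hA]⟩

lemma star_dotProduct_mulVec_eq (A : Matrix (Fin n) (Fin l) ℂ) (x : Fin n → ℂ) (z : Fin l → ℂ) :
    star x ⬝ᵥ (A *ᵥ z) = star (Aᴴ *ᵥ x) ⬝ᵥ z := by
  rw [star_mulVec, conjTranspose_conjTranspose, dotProduct_mulVec]

lemma star_mulVec_dotProduct_mulVec (A B : Matrix (Fin n) (Fin l) ℂ) (z w : Fin l → ℂ) :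
    star (A *ᵥ z) ⬝ᵥ (B *ᵥ w) = star z ᵥ* (Aᴴ * B) ⬝ᵥ w := by
  rw [star_mulVec, dotProduct_mulVec, vecMul_vecMul]

/-- `Aᴴ * E = Eᴴ * A` makes `⟪Ax, Ex⟫` real, while `(sE − A)x = 0` makes it `conj s * ‖Ex‖²`. -/
lemma det_smul_sub_ne_zero {E A : Matrix (Fin n) (Fin n) ℂ} (hsym : Aᴴ * E = Eᴴ * A)
    (hker : ∀ x, E *ᵥ x = 0 → A *ᵥ x = 0 → x = 0) {s : ℂ} (hs : star s ≠ s) :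
    (s • E - A).det ≠ 0 := by
  classical
  intro hdet
  obtain ⟨x, hx, hsx⟩ := exists_mulVec_eq_zero_iff.mpr hdet
  rw [sub_mulVec, smul_mulVec, sub_eq_zero] at hsx
  have hswap : star (A *ᵥ x) ⬝ᵥ (E *ᵥ x) = star (E *ᵥ x) ⬝ᵥ (A *ᵥ x) := by
    rw [star_mulVec_dotProduct_mulVec, star_mulVec_dotProduct_mulVec, hsym]
  rw [← hsx, star_smul, smul_dotProduct, dotProduct_smul, ← sub_eq_zero, ← sub_smul,
    smul_eq_zero] at hswap
  have hEx : E *ᵥ x = 0 :=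
    dotProduct_star_self_eq_zero.mp (hswap.resolve_left (sub_ne_zero.mpr hs))
  exact hx (hker x hEx (by rw [← hsx, hEx, smul_zero]))

lemma pencilRegular_of_conjTranspose_mul_eq {E A : Matrix (Fin n) (Fin n) ℂ}
    (hsym : Aᴴ * E = Eᴴ * A) (hker : ∀ x, E *ᵥ x = 0 → A *ᵥ x = 0 → x = 0) :
    PencilRegular E A := by
  intro h
  refine det_smul_sub_ne_zero hsym hker (s := Complex.I) (by norm_num [Complex.ext_iff]) ?_
  rw [← eval_pencilDet, h, Polynomial.eval_zero]

lemma mem_ranRel {F G : Matrix (Fin n) (Fin l) ℂ} {p : (Fin n → ℂ) × (Fin n → ℂ)} :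
    p ∈ ranRel F G ↔ ∃ z, (F *ᵥ z, G *ᵥ z) = p :=
  Iff.rfl

lemma isSymmetricRel_ranRel {F G : Matrix (Fin n) (Fin l) ℂ} (hsym : Gᴴ * F = Fᴴ * G) :
    IsSymmetricRel (ranRel F G) := by
  rintro p hp q hq
  obtain ⟨z, rfl⟩ := mem_ranRel.mp hp
  obtain ⟨w, rfl⟩ := mem_ranRel.mp hq
  simp only [ip, star_mulVec_dotProduct_mulVec, hsym]

lemma mem_adj_ranRel {F G : Matrix (Fin n) (Fin l) ℂ} {p : (Fin n → ℂ) × (Fin n → ℂ)} :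
    p ∈ adj (ranRel F G) ↔ Gᴴ *ᵥ p.1 = Fᴴ *ᵥ p.2 := by
  change (∀ q ∈ ranRel F G, _) ↔ _
  simp only [mem_ranRel, forall_exists_index, forall_apply_eq_imp_iff]
  constructor
  · intro h
    refine star_injective (dotProduct_eq _ _ fun z => ?_)
    rw [← star_dotProduct_mulVec_eq, ← star_dotProduct_mulVec_eq]
    exact h z
  · rintro h z
    simp only [ip, star_dotProduct_mulVec_eq, h]

lemma finrank_ranRel {F G : Matrix (Fin n) (Fin l) ℂ}
    (hker : ∀ z, F *ᵥ z = 0 → G *ᵥ z = 0 → z = 0) :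
    Module.finrank ℂ (ranRel F G) = l := by
  rw [ranRel, LinearMap.finrank_range_of_inj, Module.finrank_fin_fun]
  exact (injective_iff_map_eq_zero _).mpr fun z hz =>
    hker z (congrArg Prod.fst hz) (congrArg Prod.snd hz)

lemma finrank_adj_ranRel_add_finrank_ranRel (F G : Matrix (Fin n) (Fin l) ℂ) :
    Module.finrank ℂ (adj (ranRel F G)) + Module.finrank ℂ (ranRel F G) = 2 * n := by
  -- `Cᴴ = [Gᴴ, -Fᴴ]` cuts out the adjoint, and `C` has the same kernel as `[F; G]`.
  set C : Matrix (Fin n ⊕ Fin n) (Fin l) ℂ := fromRows G (-F)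
  set e := LinearEquiv.sumArrowLequivProdArrow (Fin n) (Fin n) ℂ ℂ
  have hadj : adj (ranRel F G) = (LinearMap.ker Cᴴ.mulVecLin).map (e : _ →ₗ[ℂ] _) := by
    ext p
    have he : e.symm p = Sum.elim p.1 p.2 := rfl
    rw [mem_adj_ranRel, Submodule.mem_map_equiv, LinearMap.mem_ker, mulVecLin_apply, he,
      conjTranspose_fromRows_eq_fromCols_conjTranspose, fromCols_mulVec_sumElim,
      conjTranspose_neg, neg_mulVec, ← sub_eq_add_neg, sub_eq_zero]
  have hker : LinearMap.ker C.mulVecLin = LinearMap.ker ((mulVecLin F).prod (mulVecLin G)) := by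
    ext z
    simp [C, fromRows_mulVec, neg_mulVec, ← Sum.elim_zero_zero, Sum.elim_eq_iff, and_comm]
  have hrank : C.rank = Module.finrank ℂ (ranRel F G) := by
    have h1 := LinearMap.finrank_range_add_finrank_ker C.mulVecLin
    have h2 := LinearMap.finrank_range_add_finrank_ker ((mulVecLin F).prod (mulVecLin G))
    rw [hker] at h1
    rw [Matrix.rank, ranRel]
    omega
  have hnullity := LinearMap.finrank_range_add_finrank_ker Cᴴ.mulVecLin
  rw [Module.finrank_fintype_fun_eq_card, Fintype.card_sum, Fintype.card_fin] at hnullity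
  rw [hadj, LinearEquiv.finrank_map_eq, ← hrank, ← rank_conjTranspose, Matrix.rank]
  omega

end PHDAE

open PHDAE Matrix in
theorem stmt_14_general {n : ℕ} (E D Q : Matrix (Fin n) (Fin n) ℂ)
    (hsym : Qᴴ * E = Eᴴ * Q)
    (hreg : PencilRegular E (D * Q)) :
    PencilRegular E Q ∧ Module.finrank ℂ (ranRel E Q) = n ∧
      IsSelfAdjointRel (ranRel E Q) := by
  have hker : ∀ x, E *ᵥ x = 0 → Q *ᵥ x = 0 → x = 0 := fun x hE hQ =>
    hreg.eq_zero_of_mulVec_eq_zero hE (by rw [← mulVec_mulVec, hQ, mulVec_zero])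
  have hdim : Module.finrank ℂ (ranRel E Q) = n := finrank_ranRel hker
  have hdim_adj : Module.finrank ℂ (adj (ranRel E Q)) = n := by
    have := finrank_adj_ranRel_add_finrank_ranRel E Q
    omega
  exact ⟨pencilRegular_of_conjTranspose_mul_eq hsym hker, hdim,
    Submodule.eq_of_le_of_finrank_eq (isSymmetricRel_ranRel hsym) (hdim.trans hdim_adj.symm)⟩

open PHDAE Matrix in
/-- if `Q*E = E*Q`, `D + D* ≤ 0` and `sE − DQ` is regular, then `sE − Q`
is regular and the relation `ran [E; Q]` has dimension `n` (hence is self-adjoint). -/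
theorem stmt_14 {n : ℕ} (E D Q : Matrix (Fin n) (Fin n) ℂ)
    (hsym : Qᴴ * E = Eᴴ * Q) (hdiss : (-(D + Dᴴ)).PosSemidef)
    (hreg : PencilRegular E (D * Q)) :
    PencilRegular E Q ∧ Module.finrank ℂ (ranRel E Q) = n ∧
      IsSelfAdjointRel (ranRel E Q) :=
  stmt_14_general E D Q hsym hreg
end

section
/- Let E, Q ∈ K^{n×n} with Q*E = E*Q. Then the pencil sE − Q is regular if and only if dim ran[E; Q] = n, i.e., if and only if ker E ∩ ker Q = {0}. -/
/-! If `det (sE − Q) ≡ 0`, there is a nonzero polynomial vector `v(s) = ∑ vₖ sᵏ` with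
`(sE − Q) v = 0`, i.e. `Q v₀ = 0` and `E vₖ = Q vₖ₊₁`. The symmetry `Q*E = E*Q` makes the Gram
matrix `Gᵢⱼ = ⟨E vᵢ, E vⱼ⟩` shift invariant, `Gᵢ₊₁,ⱼ = Gᵢ,ⱼ₊₁`, while `Gᵢ₀ = ⟨E vᵢ₊₁, Q v₀⟩ = 0`;
hence `G = 0`, so every `vₖ` lies in `ker E ∩ ker Q`. Conversely a common kernel vector is a
constant solution of `(sE − Q) v = 0`. -/

open Matrix
open scoped ComplexOrder

section

open Polynomial

theorem Matrix.coeff_map_C_mulVec {R m n : Type*} [Semiring R] [Fintype n]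
    (M : Matrix m n R) (v : n → R[X]) (k : ℕ) (i : m) :
    ((M.map C *ᵥ v) i).coeff k = (M *ᵥ fun j => (v j).coeff k) i := by
  simp only [mulVec, dotProduct, map_apply, finsetSum_coeff, coeff_C_mul]

theorem Matrix.coeff_pencil_mulVec_eq_zero {R n : Type*} [CommRing R] [Fintype n]
    {E Q : Matrix n n R} {v : n → R[X]} (hv : ((X : R[X]) • E.map C - Q.map C) *ᵥ v = 0) :
    Q *ᵥ (fun j => (v j).coeff 0) = 0 ∧
      ∀ k, E *ᵥ (fun j => (v j).coeff k) = Q *ᵥ fun j => (v j).coeff (k + 1) := by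
  have hcoeff (k : ℕ) (i : n) :
      (X * (E.map C *ᵥ v) i - (Q.map C *ᵥ v) i).coeff k = 0 := by
    simpa [sub_mulVec, smul_mulVec] using congr_arg (fun p => (p i).coeff k) hv
  constructor
  · funext i
    simpa [coeff_map_C_mulVec, sub_eq_zero] using hcoeff 0 i
  · intro k
    funext i
    simpa [coeff_map_C_mulVec, coeff_X_mul, sub_eq_zero] using hcoeff (k + 1) i

theorem Matrix.star_mulVec_dotProduct_mulVec_comm {R n : Type*} [CommRing R] [StarRing R]
    [Fintype n] {E Q : Matrix n n R} (hEQ : Qᴴ * E = Eᴴ * Q) (x y : n → R) :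
    star (E *ᵥ x) ⬝ᵥ (Q *ᵥ y) = star (Q *ᵥ x) ⬝ᵥ (E *ᵥ y) := by
  rw [star_mulVec, star_mulVec, ← dotProduct_mulVec, ← dotProduct_mulVec, mulVec_mulVec,
    mulVec_mulVec, hEQ]

theorem Matrix.mulVec_eq_zero_of_chain {𝕜 n : Type*} [RCLike 𝕜] [Fintype n]
    {E Q : Matrix n n 𝕜} (hEQ : Qᴴ * E = Eᴴ * Q) {w : ℕ → n → 𝕜} (h0 : Q *ᵥ w 0 = 0)
    (hstep : ∀ k, E *ᵥ w k = Q *ᵥ w (k + 1)) (k : ℕ) : E *ᵥ w k = 0 := by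
  have gram : ∀ j i, star (E *ᵥ w i) ⬝ᵥ (E *ᵥ w j) = 0 := by
    intro j
    induction j with
    | zero =>
      intro i
      calc star (E *ᵥ w i) ⬝ᵥ (E *ᵥ w 0)
          = star (Q *ᵥ w (i + 1)) ⬝ᵥ (E *ᵥ w 0) := by rw [hstep i]
        _ = star (E *ᵥ w (i + 1)) ⬝ᵥ (Q *ᵥ w 0) :=
          (star_mulVec_dotProduct_mulVec_comm hEQ _ _).symm
        _ = 0 := by rw [h0, dotProduct_zero]
    | succ j ih =>
      intro i
      calc star (E *ᵥ w i) ⬝ᵥ (E *ᵥ w (j + 1))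
          = star (Q *ᵥ w (i + 1)) ⬝ᵥ (E *ᵥ w (j + 1)) := by rw [hstep i]
        _ = star (E *ᵥ w (i + 1)) ⬝ᵥ (Q *ᵥ w (j + 1)) :=
          (star_mulVec_dotProduct_mulVec_comm hEQ _ _).symm
        _ = 0 := by rw [← hstep j, ih]
  exact dotProduct_star_self_eq_zero.mp (gram k k)

theorem Matrix.det_pencil_eq_zero_of_mem_ker {K n : Type*} [Field K] [Fintype n]
    [DecidableEq n] {E Q : Matrix n n K} {x : n → K} (hx : x ≠ 0) (hE : E *ᵥ x = 0)
    (hQ : Q *ᵥ x = 0) :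
    ((X : K[X]) • E.map C - Q.map C).det = 0 := by
  refine exists_mulVec_eq_zero_iff.mp ⟨C ∘ x, fun h => hx ?_, ?_⟩
  · funext i; simpa using congr_fun h i
  · have hmap (M : Matrix n n K) : M.map C *ᵥ (C ∘ x) = C ∘ (M *ᵥ x) :=
      (funext ((C : K →+* K[X]).map_mulVec M x)).symm
    rw [sub_mulVec, smul_mulVec, hmap, hmap, hE, hQ]
    funext i; simp

theorem Matrix.ker_inf_ker_eq_bot_of_det_pencil_ne_zero {K n : Type*} [Field K] [Fintype n]
    [DecidableEq n] {E Q : Matrix n n K} (hdet : ((X : K[X]) • E.map C - Q.map C).det ≠ 0) :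
    LinearMap.ker E.mulVecLin ⊓ LinearMap.ker Q.mulVecLin = ⊥ :=
  (Submodule.eq_bot_iff _).mpr fun _ hx =>
    by_contra fun hx0 => hdet (det_pencil_eq_zero_of_mem_ker hx0 hx.1 hx.2)

theorem Matrix.det_pencil_ne_zero_of_ker_inf_ker_eq_bot {𝕜 n : Type*} [RCLike 𝕜] [Fintype n]
    [DecidableEq n] {E Q : Matrix n n 𝕜} (hEQ : Qᴴ * E = Eᴴ * Q)
    (hker : LinearMap.ker E.mulVecLin ⊓ LinearMap.ker Q.mulVecLin = ⊥) :
    ((X : 𝕜[X]) • E.map C - Q.map C).det ≠ 0 := by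
  intro hdet
  obtain ⟨v, hv, hpencil⟩ := exists_mulVec_eq_zero_iff.mpr hdet
  obtain ⟨h0, hstep⟩ := coeff_pencil_mulVec_eq_zero hpencil
  have hE := mulVec_eq_zero_of_chain hEQ h0 hstep
  have hQ : ∀ k, Q *ᵥ (fun j => (v j).coeff k) = 0
    | 0 => h0
    | k + 1 => (hstep k).symm.trans (hE k)
  refine hv (funext fun j => Polynomial.ext fun k => ?_)
  have hk : (fun j => (v j).coeff k) ∈ LinearMap.ker E.mulVecLin ⊓ LinearMap.ker Q.mulVecLin :=
    ⟨hE k, hQ k⟩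
  rw [hker] at hk
  exact congr_fun hk j

theorem Matrix.det_pencil_ne_zero_iff {𝕜 n : Type*} [RCLike 𝕜] [Fintype n]
    [DecidableEq n] {E Q : Matrix n n 𝕜} (hEQ : Qᴴ * E = Eᴴ * Q) :
    ((X : 𝕜[X]) • E.map C - Q.map C).det ≠ 0 ↔
      LinearMap.ker E.mulVecLin ⊓ LinearMap.ker Q.mulVecLin = ⊥ :=
  ⟨ker_inf_ker_eq_bot_of_det_pencil_ne_zero, det_pencil_ne_zero_of_ker_inf_ker_eq_bot hEQ⟩

theorem LinearMap.finrank_range_eq_iff_ker_eq_bot {K V W : Type*} [DivisionRing K]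
    [AddCommGroup V] [Module K V] [AddCommGroup W] [Module K W] [FiniteDimensional K V]
    (f : V →ₗ[K] W) :
    Module.finrank K (range f) = Module.finrank K V ↔ ker f = ⊥ := by
  rw [← Submodule.finrank_eq_zero]
  have := f.finrank_range_add_finrank_ker
  omega

end

open PHDAE Matrix in
/-- for `Q*E = E*Q`, the pencil `sE − Q` is regular iff
`dim ran [E; Q] = n`, iff `ker E ∩ ker Q = {0}`. -/
theorem stmt_15 {n : ℕ} (E Q : Matrix (Fin n) (Fin n) ℂ) (hsym : Qᴴ * E = Eᴴ * Q) :
    (PencilRegular E Q ↔ Module.finrank ℂ (ranRel E Q) = n) ∧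
    (PencilRegular E Q ↔ LinearMap.ker E.mulVecLin ⊓ LinearMap.ker Q.mulVecLin = ⊥) := by
  have hreg : PencilRegular E Q ↔ _ := det_pencil_ne_zero_iff hsym
  have hrank := (E.mulVecLin.prod Q.mulVecLin).finrank_range_eq_iff_ker_eq_bot
  rw [Module.finrank_fin_fun, LinearMap.ker_prod] at hrank
  exact ⟨hreg.trans hrank.symm, hreg⟩
end

section
/- Let sE − A ∈ K[s]^{n×n} be regular. Then the index of sE − A equals the smallest integer k for which there exist M > 0 and ω ∈ ℝ such that ‖(λE − A)^{−1}‖ ≤ M|λ|^{k−1} for all real λ > ω. -/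
open Matrix
open scoped ComplexOrder

/-!
Conjugating with `S` and `T`, the resolvent `(λE - A)⁻¹` becomes, up to bounded factors, the
block-diagonal matrix `diag ((λ - J)⁻¹, (λN - 1)⁻¹)`. The first block is `O(λ⁻¹)` by the Neumann
series. The second block is the finite sum `-∑_{i<ν} λ^i N^i`: it is `O(λ^(ν-1))`, and it is not
`O(λ^(ν-2))` because its top coefficient `N^(ν-1)` is nonzero. Hence the resolvent is
`O(λ^(k-1))` exactly when `ν ≤ k`.
-/

open Asymptotics Filter Topology

section RealPowers

lemma isBigO_rpow_rpow_atTop_of_le {a b : ℝ} (hab : a ≤ b) :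
    (fun x : ℝ => x ^ a) =O[atTop] (fun x => x ^ b) := by
  refine IsBigO.of_bound 1 ?_
  filter_upwards [eventually_ge_atTop 1] with x hx
  rw [Real.norm_of_nonneg (by positivity), Real.norm_of_nonneg (by positivity), one_mul]
  exact Real.rpow_le_rpow_of_exponent_le hx hab

lemma exists_bound_rpow_iff_isBigO {f : ℝ → ℝ} (hf : ∀ x, 0 ≤ f x) (r : ℝ) :
    (∃ M > (0 : ℝ), ∃ ω : ℝ, ∀ x : ℝ, ω < x → f x ≤ M * |x| ^ r) ↔
      f =O[atTop] (fun x => x ^ r) := by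
  constructor
  · rintro ⟨M, -, ω, hM⟩
    refine IsBigO.of_bound M ?_
    filter_upwards [eventually_gt_atTop ω, eventually_ge_atTop 0] with x hxω hx
    rw [Real.norm_of_nonneg (hf x), Real.norm_of_nonneg (by positivity)]
    simpa only [abs_of_nonneg hx] using hM x hxω
  · intro h
    obtain ⟨c, hc⟩ := h.bound
    obtain ⟨ω, hω⟩ := eventually_atTop.1 (hc.and (eventually_ge_atTop 0))
    refine ⟨max c 1, by positivity, ω, fun x hx => ?_⟩
    obtain ⟨hbound, hx⟩ := hω x hx.le
    rw [Real.norm_of_nonneg (hf x), Real.norm_of_nonneg (by positivity)] at hbound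
    rw [abs_of_nonneg hx]
    exact hbound.trans (by gcongr; exact le_max_left _ _)

variable {E : Type*} [NormedAddCommGroup E] [NormedSpace ℂ E]

lemma isBigO_ofReal_pow_smul (X : E) {i : ℕ} {r : ℝ} (hi : (i : ℝ) ≤ r) :
    (fun x : ℝ => (x : ℂ) ^ i • X) =O[atTop] (fun x => x ^ r) := by
  refine IsBigO.trans ?_ (isBigO_rpow_rpow_atTop_of_le hi)
  refine IsBigO.of_bound ‖X‖ ?_
  filter_upwards [eventually_ge_atTop 0] with x hx
  rw [norm_smul, norm_pow, Complex.norm_real, Real.norm_of_nonneg hx, Real.rpow_natCast,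
    Real.norm_of_nonneg (by positivity), mul_comm]

lemma isBigO_sum_ofReal_pow_smul (X : ℕ → E) {s : Finset ℕ} {r : ℝ}
    (hs : ∀ i ∈ s, (i : ℝ) ≤ r) :
    (fun x : ℝ => ∑ i ∈ s, (x : ℂ) ^ i • X i) =O[atTop] (fun x => x ^ r) := by
  simpa [Finset.sum_fn] using IsBigO.sum fun i hi => isBigO_ofReal_pow_smul (X i) (hs i hi)

lemma eq_zero_of_isBigO_ofReal_pow_smul {X : E} {d : ℕ}
    (h : (fun x : ℝ => (x : ℂ) ^ d • X) =O[atTop] (fun x => x ^ ((d : ℝ) - 1))) : X = 0 := by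
  obtain ⟨C, hC⟩ := h.bound
  by_contra hX
  have hlinear : ∀ᶠ x : ℝ in atTop, x * ‖X‖ ≤ C := by
    filter_upwards [hC, eventually_gt_atTop 0] with x hCx hx
    rw [norm_smul, norm_pow, Complex.norm_real, Real.norm_of_nonneg hx.le,
      Real.norm_of_nonneg (by positivity), Real.rpow_sub_one hx.ne', Real.rpow_natCast,
      mul_div_assoc', le_div_iff₀ hx] at hCx
    have hxd : 0 < x ^ d := by positivity
    nlinarith
  have hunbounded := (tendsto_id.atTop_mul_const (norm_pos_iff.2 hX)).eventually_gt_atTop C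
  obtain ⟨x, hle, hgt⟩ := (hlinear.and hunbounded).exists
  exact (lt_irrefl C) (hgt.trans_le hle)

lemma tendsto_ofReal_inv_smul_atTop (X : E) : Tendsto (fun x : ℝ => (x : ℂ)⁻¹ • X) atTop (𝓝 0) := by
  have hinv : Tendsto (fun x : ℝ => (x : ℂ)⁻¹) atTop (𝓝 0) := by
    simpa [Function.comp_def] using
      (Complex.continuous_ofReal.tendsto 0).comp tendsto_inv_atTop_zero
  simpa using hinv.smul_const X

end RealPowers

namespace Matrix

lemma smul_sub_eq_reindex_fromBlocks {K m o n : Type*} [CommRing K] [Fintype n] [DecidableEq m]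
    [DecidableEq o] (e : m ⊕ o ≃ n) {E A S T : Matrix n n K}
    {J : Matrix m m K} {N : Matrix o o K}
    (hE : S * E * T = reindex e e (fromBlocks 1 0 0 N))
    (hA : S * A * T = reindex e e (fromBlocks J 0 0 1)) (μ : K) :
    S * (μ • E - A) * T = reindex e e (fromBlocks (μ • 1 - J) 0 0 (μ • N - 1)) := by
  have hblocks : fromBlocks (μ • 1 - J) 0 0 (μ • N - 1) =
      μ • fromBlocks 1 0 0 N - fromBlocks J 0 0 1 := by
    simp [sub_eq_add_neg, fromBlocks_smul, fromBlocks_neg, fromBlocks_add]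
  rw [Matrix.mul_sub, Matrix.sub_mul, Matrix.mul_smul, Matrix.smul_mul, hE, hA, hblocks]
  rfl

variable {K : Type*} [CommRing K] {m o n : Type*} [Fintype m] [Fintype o] [Fintype n]
  [DecidableEq m] [DecidableEq o] [DecidableEq n]

lemma inv_eq_mul_inv_mul_of_mul_mul_eq {S T X Y : Matrix n n K} (hS : IsUnit S.det)
    (hT : IsUnit T.det) (h : S * X * T = Y) : X⁻¹ = T * Y⁻¹ * S := by
  rw [← h, mul_inv_rev, mul_inv_rev]
  simp only [Matrix.mul_assoc, nonsing_inv_mul _ hS, Matrix.mul_one,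
    mul_nonsing_inv_cancel_left _ _ hT]

lemma inv_smul_sub_one_of_pow_eq_zero {N : Matrix o o K} {ν : ℕ} (hN : N ^ ν = 0) (μ : K) :
    (μ • N - 1)⁻¹ = -∑ i ∈ Finset.range ν, μ ^ i • N ^ i := by
  refine inv_eq_right_inv ?_
  simp_rw [← smul_pow]
  rw [mul_neg, ← neg_mul, neg_sub, mul_neg_geom_sum, smul_pow, hN, smul_zero, sub_zero]

lemma inv_reindex_fromBlocks_zero (e : m ⊕ o ≃ n) {A : Matrix m m K} {D : Matrix o o K}
    (hA : IsUnit A) (hD : IsUnit D) :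
    (reindex e e (fromBlocks A 0 0 D))⁻¹ = reindex e e (fromBlocks A⁻¹ 0 0 D⁻¹) := by
  rw [inv_reindex, inv_fromBlocks_zero₂₁_of_isUnit_iff _ _ _ (iff_of_true hA hD)]
  simp

end Matrix

lemma Asymptotics.isBigO_mul_const_left_iff' {α R F : Type*} [SeminormedRing R] [Norm F]
    {l : Filter α} {f : α → R} {g : α → F} {c : R} (hc : IsUnit c) :
    (fun x => f x * c) =O[l] g ↔ f =O[l] g := by
  have hmul : ∀ (c : R) (f : α → R), (fun x => f x * c) =O[l] f := fun c f =>
    isBigO_of_le' (c := ‖c‖) l fun x => (norm_mul_le _ _).trans_eq (mul_comm _ _)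
  refine ⟨fun h => ?_, (hmul c f).trans⟩
  obtain ⟨u, rfl⟩ := hc
  simpa [mul_assoc] using (hmul ↑u⁻¹ _).trans h

section Frobenius

attribute [local instance] Matrix.frobeniusNormedAddCommGroup Matrix.frobeniusNormedSpace
  Matrix.frobeniusNormedRing

namespace Matrix

variable {α : Type*} [NormedAddCommGroup α] {l m n o : Type*} [Fintype l] [Fintype m]
  [Fintype n] [Fintype o]

lemma frobenius_norm_sq (A : Matrix m n α) : ‖A‖ ^ 2 = ∑ i, ∑ j, ‖A i j‖ ^ 2 := by
  rw [frobenius_norm_def, ← Real.rpow_natCast, ← Real.rpow_mul (by positivity)]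
  norm_num

lemma frobenius_norm_reindex {m' n' : Type*} [Fintype m'] [Fintype n'] (e₁ : m ≃ m')
    (e₂ : n ≃ n') (A : Matrix m n α) : ‖reindex e₁ e₂ A‖ = ‖A‖ := by
  simp only [frobenius_norm_def, reindex_apply, submatrix_apply]
  rw [← e₁.sum_comp]
  simp_rw [← e₂.sum_comp, Equiv.symm_apply_apply]

lemma frobenius_norm_fromBlocks_sq (A : Matrix l n α) (B : Matrix l o α) (C : Matrix m n α)
    (D : Matrix m o α) :
    ‖fromBlocks A B C D‖ ^ 2 = ‖A‖ ^ 2 + ‖B‖ ^ 2 + ‖C‖ ^ 2 + ‖D‖ ^ 2 := by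
  simp only [frobenius_norm_sq, Fintype.sum_sum_type, fromBlocks_apply₁₁, fromBlocks_apply₁₂,
    fromBlocks_apply₂₁, fromBlocks_apply₂₂, Finset.sum_add_distrib]
  ring

lemma isBigO_reindex_fromBlocks_iff {ι F : Type*} [Norm F] {L : Filter ι} {g : ι → F}
    (e : m ⊕ o ≃ n) {G : ι → Matrix m m α} {H : ι → Matrix o o α} :
    (fun x => reindex e e (fromBlocks (G x) 0 0 (H x))) =O[L] g ↔ G =O[L] g ∧ H =O[L] g := by
  set W := fun x => reindex e e (fromBlocks (G x) 0 0 (H x))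
  have hsq : ∀ x, ‖W x‖ ^ 2 = ‖G x‖ ^ 2 + ‖H x‖ ^ 2 := fun x => by
    rw [frobenius_norm_reindex, frobenius_norm_fromBlocks_sq]
    simp
  have hG : ∀ x, ‖G x‖ ≤ ‖W x‖ := fun x =>
    le_of_pow_le_pow_left₀ two_ne_zero (norm_nonneg _) <| by
      rw [hsq]; exact le_add_of_nonneg_right (sq_nonneg _)
  have hH : ∀ x, ‖H x‖ ≤ ‖W x‖ := fun x =>
    le_of_pow_le_pow_left₀ two_ne_zero (norm_nonneg _) <| by
      rw [hsq]; exact le_add_of_nonneg_left (sq_nonneg _)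
  refine ⟨fun h => ⟨(isBigO_of_le L hG).trans h, (isBigO_of_le L hH).trans h⟩, ?_⟩
  rintro ⟨hGg, hHg⟩
  refine (isBigO_of_le' (c := 1) L fun x => ?_).trans (hGg.norm_left.add hHg.norm_left)
  rw [one_mul, Real.norm_of_nonneg (by positivity)]
  nlinarith [hsq x, norm_nonneg (G x), norm_nonneg (H x), norm_nonneg (W x)]

end Matrix

open Matrix

variable {m o : Type*} [Fintype m] [Fintype o] [DecidableEq m] [DecidableEq o]

lemma eventually_isUnit_one_sub_inv_smul (J : Matrix m m ℂ) :
    ∀ᶠ x : ℝ in atTop, IsUnit (1 - (x : ℂ)⁻¹ • J) := by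
  filter_upwards [(tendsto_ofReal_inv_smul_atTop J).eventually (Metric.ball_mem_nhds 0 one_pos)]
    with x hx
  rw [dist_zero_right] at hx
  simpa using (Units.oneSub _ hx).isUnit

lemma smul_one_sub_eq_smul_one_sub_inv_smul {K ι : Type*} [Field K] [DecidableEq ι] {μ : K}
    (hμ : μ ≠ 0) (J : Matrix ι ι K) :
    μ • 1 - J = μ • (1 - μ⁻¹ • J) := by
  rw [smul_sub, smul_smul, mul_inv_cancel₀ hμ, one_smul]

lemma eventually_isUnit_smul_one_sub (J : Matrix m m ℂ) :
    ∀ᶠ x : ℝ in atTop, IsUnit ((x : ℂ) • 1 - J) := by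
  filter_upwards [eventually_isUnit_one_sub_inv_smul J, eventually_ne_atTop 0] with x hunit hx
  have hx' : (x : ℂ) ≠ 0 := Complex.ofReal_ne_zero.2 hx
  rw [smul_one_sub_eq_smul_one_sub_inv_smul hx']
  exact hunit.smul (Units.mk0 _ hx')

lemma isBigO_inv_smul_one_sub (J : Matrix m m ℂ) :
    (fun x : ℝ => ((x : ℂ) • 1 - J)⁻¹) =O[atTop] (fun x => x ^ (-1 : ℝ)) := by
  have hinv : (fun x : ℝ => (1 - (x : ℂ)⁻¹ • J)⁻¹) =O[atTop] (fun _ => (1 : ℝ)) := by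
    simpa [Function.comp_def, nonsing_inv_eq_ringInverse] using
      NormedRing.inverse_one_sub_norm.comp_tendsto (tendsto_ofReal_inv_smul_atTop J)
  have hscalar : (fun x : ℝ => (x : ℂ)⁻¹) =O[atTop] (fun x => x ^ (-1 : ℝ)) := by
    refine IsBigO.of_bound 1 ?_
    filter_upwards [eventually_gt_atTop 0] with x hx
    simp [Real.rpow_neg_one, abs_of_pos hx]
  refine (hscalar.smul hinv).congr' ?_ (Eventually.of_forall fun x => by simp)
  filter_upwards [eventually_isUnit_one_sub_inv_smul J, eventually_ne_atTop 0]
    with x hunit hx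
  have hx' : (x : ℂ) ≠ 0 := Complex.ofReal_ne_zero.2 hx
  refine (inv_eq_right_inv ?_).symm
  rw [smul_one_sub_eq_smul_one_sub_inv_smul hx', smul_mul_smul_comm, mul_inv_cancel₀ hx',
    one_smul, mul_nonsing_inv _ ((isUnit_iff_isUnit_det _).1 hunit)]

lemma isBigO_inv_smul_sub_one_iff {N : Matrix o o ℂ} {ν : ℕ} (hν : IsLeast {k | N ^ k = 0} ν)
    (k : ℕ) :
    (fun x : ℝ => ((x : ℂ) • N - 1)⁻¹) =O[atTop] (fun x => x ^ ((k : ℝ) - 1)) ↔ ν ≤ k := by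
  simp_rw [inv_smul_sub_one_of_pow_eq_zero hν.1, isBigO_neg_left]
  constructor
  · intro h
    by_contra! hk
    obtain ⟨d, rfl⟩ : ∃ d, ν = d + 1 := ⟨ν - 1, by omega⟩
    have htop : (fun x : ℝ => (x : ℂ) ^ d • N ^ d) =O[atTop] (fun x => x ^ ((d : ℝ) - 1)) := by
      have hsplit : (fun x : ℝ => (x : ℂ) ^ d • N ^ d) = fun x : ℝ =>
          ∑ i ∈ Finset.range (d + 1), (x : ℂ) ^ i • N ^ i -
            ∑ i ∈ Finset.range d, (x : ℂ) ^ i • N ^ i := by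
        funext x
        rw [Finset.sum_range_succ, add_sub_cancel_left]
      rw [hsplit]
      refine (h.trans (isBigO_rpow_rpow_atTop_of_le ?_)).sub
        (isBigO_sum_ofReal_pow_smul _ fun i hi => ?_)
      · have : (k : ℝ) ≤ d := by exact_mod_cast Nat.lt_succ_iff.mp hk
        linarith
      · have : (i : ℝ) + 1 ≤ d := by exact_mod_cast Finset.mem_range.mp hi
        linarith
    have := hν.2 (eq_zero_of_isBigO_ofReal_pow_smul htop)
    omega
  · intro hk
    refine isBigO_sum_ofReal_pow_smul _ fun i hi => ?_
    have : (i : ℝ) + 1 ≤ k := by exact_mod_cast (Finset.mem_range.mp hi).trans_le hk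
    linarith

lemma PHDAE.mnorm_eq_norm {n : ℕ} (M : Matrix (Fin n) (Fin n) ℂ) : PHDAE.mnorm M = ‖M‖ := by
  rw [PHDAE.mnorm, ← frobenius_norm_sq, Real.sqrt_sq (norm_nonneg M)]

open PHDAE Matrix in
/-- for a regular pencil given in Weierstraß form
`S (sE − A) T = diag (sI − J, sN − I)` with `N` nilpotent of nilpotency index `ν`
(the Kronecker index of the pencil), `ν` is the least `k` such that
`‖(λE − A)⁻¹‖ ≤ M |λ|^(k−1)` for all sufficiently large real `λ`. -/
theorem stmt_17 {n p q : ℕ} (hpq : p + q = n)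
    (E A S T : Matrix (Fin n) (Fin n) ℂ)
    (J : Matrix (Fin p) (Fin p) ℂ) (N : Matrix (Fin q) (Fin q) ℂ)
    (hS : IsUnit S.det) (hT : IsUnit T.det)
    (hE : S * E * T = Matrix.reindex (finSumFinEquiv.trans (finCongr hpq))
      (finSumFinEquiv.trans (finCongr hpq)) (Matrix.fromBlocks 1 0 0 N))
    (hA : S * A * T = Matrix.reindex (finSumFinEquiv.trans (finCongr hpq))
      (finSumFinEquiv.trans (finCongr hpq)) (Matrix.fromBlocks J 0 0 1))
    (ν : ℕ) (hν : IsLeast {k : ℕ | N ^ k = 0} ν) :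
    IsLeast {k : ℕ | ∃ M > (0 : ℝ), ∃ ω : ℝ, ∀ lam : ℝ, ω < lam →
      mnorm (((lam : ℂ) • E - A)⁻¹) ≤ M * |lam| ^ ((k : ℝ) - 1)} ν := by
  set e := finSumFinEquiv.trans (finCongr hpq)
  have hgrowth : ∀ k : ℕ, (∃ M > (0 : ℝ), ∃ ω : ℝ, ∀ lam : ℝ, ω < lam →
      mnorm (((lam : ℂ) • E - A)⁻¹) ≤ M * |lam| ^ ((k : ℝ) - 1)) ↔ ν ≤ k := by
    intro k
    have hblocks : (fun lam : ℝ => ((lam : ℂ) • E - A)⁻¹) =ᶠ[atTop] fun lam : ℝ =>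
        T * reindex e e (fromBlocks ((lam : ℂ) • 1 - J)⁻¹ 0 0 ((lam : ℂ) • N - 1)⁻¹) * S := by
      filter_upwards [eventually_isUnit_smul_one_sub J] with lam hJ
      rw [inv_eq_mul_inv_mul_of_mul_mul_eq hS hT (smul_sub_eq_reindex_fromBlocks e hE hA _),
        inv_reindex_fromBlocks_zero e hJ ((IsNilpotent.smul ⟨ν, hν.1⟩ _).isUnit_sub_one)]
    simp_rw [mnorm_eq_norm]
    rw [exists_bound_rpow_iff_isBigO (fun _ => norm_nonneg _), isBigO_norm_left,
      isBigO_congr hblocks EventuallyEq.rfl,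
      isBigO_mul_const_left_iff' ((isUnit_iff_isUnit_det S).2 hS),
      isBigO_const_mul_left_iff' ((isUnit_iff_isUnit_det T).2 hT),
      isBigO_reindex_fromBlocks_iff, isBigO_inv_smul_sub_one_iff hν]
    refine and_iff_right ((isBigO_inv_smul_one_sub J).trans (isBigO_rpow_rpow_atTop_of_le ?_))
    linarith [(k.cast_nonneg : (0 : ℝ) ≤ k)]
  exact ⟨(hgrowth ν).2 le_rfl, fun k hk => (hgrowth k).1 hk⟩

end Frobenius
end
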